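/- arXiv:1208.1915 — 2 statements merged into one kernel-verified Lean document; each statement's English description precedes it below -/
import Mathlib

section
/- Let n ≥ 1, let (a_1, …, a_n) ∈ N(Δ_n), and let x_1, …, x_{n+1} be the sequence produced from (a_1, …, a_n) by the recursive rule. Then x_1 x_2 … x_{n+1} is a 210-avoiding primitive ascent sequence of length n+1; that is, x_1 = 0, 0 ≤ x_{i+1} ≤ asc(x_1 x_2 … x_i) + 1 for all 1 ≤ i ≤ n, x_i ≠ x_{i+1} for all 1 ≤ i ≤ n, and there are no indices i < j < k with x_i > x_j > x_k. -/
/-!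
Let `D(p, q) = weakDescents a p q` be the set of weak descents `j ∈ (p, q]` of `a`.
By induction, `x (t+1) = a t - #D(1, t)` and `asc(x 1 … x (t+1)) = t - #D(1, t)`: the
ascents of `x` are exactly the strict ascents of `a`, which makes `x` a primitive ascent
sequence. Avoiding `a i ≥ a j ≥ a k` forces the bottoms `a j` of weak descents to lie below
every later entry and their tops `a (j-1)` to be strict left-to-right maxima. Counting
bottoms in `(L, a q]`, or tops in `[a p, a q)`, bounds `#D(p, q)`; this gives `x ≥ 0`, and
shows that a drop `x (p+1) > x (q+1)` needs an earlier `a u ≥ a q` while a drop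
`x (q+1) > x (r+1)` needs some `a k ≤ a q` with `q < k ≤ r`. A pattern `210` in `x` would
therefore produce a forbidden chain `a u ≥ a q ≥ a k`.
-/

/-- `ascZ x m` is the number of ascents in the integer sequence `x 1, …, x m`. -/
def ascZ (x : ℕ → ℤ) (m : ℕ) : ℕ :=
  ((Finset.Ico 1 m).filter (fun i => x i < x (i + 1))).card

/-- `(a 1, …, a n) ∈ N(Δ_n)`: a 01-filling of the staircase `Δ_n` where row `i`
has its unique 1 in column `a i` (so `1 ≤ a i ≤ i`), with no NE-chain of length 3
(no `i < j < k` with `a i ≥ a j ≥ a k`). -/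
def NDelta (a : ℕ → ℕ) (n : ℕ) : Prop :=
  (∀ i, 1 ≤ i → i ≤ n → 1 ≤ a i ∧ a i ≤ i) ∧
  ¬ ∃ i j k, 1 ≤ i ∧ i < j ∧ j < k ∧ k ≤ n ∧ a j ≤ a i ∧ a k ≤ a j

/-- `x 1, …, x (n+1)` is the (integer-valued) sequence produced from `(a 1, …, a n)`
by the recursive rule: `x 1 = 0`, `x 2 = 1`, and for `2 ≤ i ≤ n`,
`x (i+1) = asc(x 1 … x i) + 1 + a i - i` if `a (i-1) < a i`, and
`x (i+1) = asc(x 1 … x i) + a i - i` if `a (i-1) ≥ a i`. -/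
def RecRule (a : ℕ → ℕ) (n : ℕ) (x : ℕ → ℤ) : Prop :=
  x 1 = 0 ∧ x 2 = 1 ∧ ∀ i, 2 ≤ i → i ≤ n →
    x (i + 1) = if a (i - 1) < a i
      then (ascZ x i : ℤ) + 1 + (a i : ℤ) - (i : ℤ)
      else (ascZ x i : ℤ) + (a i : ℤ) - (i : ℤ)

open Finset

def weakDescents (a : ℕ → ℕ) (p q : ℕ) : Finset ℕ :=
  (Ioc p q).filter fun j => a j ≤ a (j - 1)

/-- `x (t+1)` in terms of `a`, see `RecRule.eq_adjustedColumn`. -/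
def adjustedColumn (a : ℕ → ℕ) (t : ℕ) : ℤ :=
  a t - #(weakDescents a 1 t)

section WeakDescents

variable {a : ℕ → ℕ} {p q r : ℕ}

lemma card_weakDescents_add (hpq : p ≤ q) (hqr : q ≤ r) :
    #(weakDescents a p q) + #(weakDescents a q r) = #(weakDescents a p r) := by
  rw [weakDescents, weakDescents, weakDescents,
    ← card_union_of_disjoint (disjoint_filter_filter (Ioc_disjoint_Ioc_of_le le_rfl)),
    ← filter_union, Ioc_union_Ioc_eq_Ioc hpq hqr]

lemma card_weakDescents_succ (hpq : p ≤ q) :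
    #(weakDescents a p (q + 1)) = #(weakDescents a p q) + if a (q + 1) ≤ a q then 1 else 0 := by
  rw [← card_weakDescents_add hpq (Nat.le_add_right q 1)]
  congr 1
  rw [weakDescents, Nat.Ioc_succ_singleton, filter_singleton, Nat.add_sub_cancel]
  split_ifs <;> rfl

lemma adjustedColumn_sub (hp : 1 ≤ p) (hpq : p ≤ q) :
    adjustedColumn a q - adjustedColumn a p = (a q : ℤ) - a p - #(weakDescents a p q) := by
  rw [adjustedColumn, adjustedColumn, ← card_weakDescents_add hp hpq]
  push_cast
  ring

end WeakDescents

lemma ascZ_succ (x : ℕ → ℤ) {m : ℕ} (hm : 1 ≤ m) :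
    ascZ x (m + 1) = ascZ x m + if x m < x (m + 1) then 1 else 0 := by
  rw [ascZ, ascZ, ← Ico_union_Ico_eq_Ico hm m.le_succ, filter_union,
    card_union_of_disjoint (disjoint_filter_filter (Ico_disjoint_Ico_consecutive 1 m (m + 1))),
    Nat.Ico_succ_singleton, filter_singleton]
  split_ifs <;> rfl

namespace NDelta

variable {a : ℕ → ℕ} {n p q : ℕ}

lemma descent_bottom_lt (hA : NDelta a n) {j t : ℕ} (hj : 2 ≤ j) (hd : a j ≤ a (j - 1))
    (hjt : j < t) (ht : t ≤ n) : a j < a t := by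
  by_contra h
  exact hA.2 ⟨j - 1, j, t, by omega, by omega, hjt, ht, hd, by omega⟩

lemma lt_descent_top (hA : NDelta a n) {u j : ℕ} (hu : 1 ≤ u) (huj : u < j - 1)
    (hd : a j ≤ a (j - 1)) (hj : j ≤ n) : a u < a (j - 1) := by
  by_contra h
  exact hA.2 ⟨u, j - 1, j, hu, huj, by omega, hj, by omega, hd⟩

lemma card_weakDescents_le_sub_of_lt_bottoms (hA : NDelta a n) (hp : 1 ≤ p) (hq : q ≤ n)
    {L : ℕ} (hL : ∀ j ∈ weakDescents a p q, L < a j) : #(weakDescents a p q) ≤ a q - L := by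
  have hmem : ∀ j ∈ weakDescents a p q, (p < j ∧ j ≤ q) ∧ a j ≤ a (j - 1) := by
    intro j hj
    simpa only [weakDescents, mem_filter, mem_Ioc] using hj
  calc #(weakDescents a p q) ≤ #(Ioc L (a q)) := by
        refine card_le_card_of_injOn a (fun j hj => ?_) (fun j hj j' hj' hjj' => ?_)
        · obtain ⟨⟨hpj, hjq⟩, hd⟩ := hmem j hj
          refine coe_Ioc L (a q) ▸ ⟨hL j hj, ?_⟩
          rcases hjq.lt_or_eq with hjq | rfl
          · exact (hA.descent_bottom_lt (by omega) hd hjq hq).le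
          · exact le_rfl
        · obtain ⟨⟨hpj, hjq⟩, hd⟩ := hmem j hj
          obtain ⟨⟨hpj', hjq'⟩, hd'⟩ := hmem j' hj'
          by_contra hne
          rcases Nat.lt_or_gt_of_ne hne with h | h
          · exact (hA.descent_bottom_lt (by omega) hd h (by omega)).ne hjj'
          · exact (hA.descent_bottom_lt (by omega) hd' h (by omega)).ne hjj'.symm
    _ = a q - L := Nat.card_Ioc _ _

lemma card_weakDescents_le_sub_of_prefix_lt (hA : NDelta a n) (hp : 1 ≤ p) (hq : q ≤ n)
    (hmax : ∀ u, 1 ≤ u → u < q → a u < a q) : #(weakDescents a p q) ≤ a q - a p := by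
  have hmem : ∀ j ∈ weakDescents a p q, (p < j ∧ j < q) ∧ a j ≤ a (j - 1) := by
    intro j hj
    simp only [weakDescents, mem_filter, mem_Ioc] at hj
    have hjq : j ≠ q := by
      rintro rfl
      exact absurd hj.2 (not_le.2 (hmax (j - 1) (by omega) (by omega)))
    exact ⟨⟨hj.1.1, by omega⟩, hj.2⟩
  calc #(weakDescents a p q) ≤ #(Ico (a p) (a q)) := by
        refine card_le_card_of_injOn (fun j => a (j - 1)) (fun j hj => ?_)
          (fun j hj j' hj' hjj' => ?_)
        · obtain ⟨⟨hpj, hjq⟩, hd⟩ := hmem j hj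
          refine coe_Ico (a p) (a q) ▸ ⟨?_, hmax (j - 1) (by omega) (by omega)⟩
          rcases (show p ≤ j - 1 by omega).lt_or_eq with hpj | hpj
          · exact (hA.lt_descent_top hp hpj hd (by omega)).le
          · exact hpj ▸ le_rfl
        · obtain ⟨⟨hpj, hjq⟩, hd⟩ := hmem j hj
          obtain ⟨⟨hpj', hjq'⟩, hd'⟩ := hmem j' hj'
          by_contra hne
          rcases Nat.lt_or_gt_of_ne hne with h | h
          · exact (hA.lt_descent_top (by omega) (by omega) hd' (by omega)).ne hjj'
          · exact (hA.lt_descent_top (by omega) (by omega) hd (by omega)).ne hjj'.symm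
    _ = a q - a p := Nat.card_Ico _ _

lemma adjustedColumn_nonneg (hA : NDelta a n) {t : ℕ} (ht : t ≤ n) :
    0 ≤ adjustedColumn a t := by
  have := hA.card_weakDescents_le_sub_of_lt_bottoms le_rfl ht (L := 0) fun j hj => by
    simp only [weakDescents, mem_filter, mem_Ioc] at hj
    exact (hA.1 j (by omega) (by omega)).1
  rw [adjustedColumn]
  omega

lemma exists_le_before_of_adjustedColumn_lt (hA : NDelta a n) (hp : 1 ≤ p) (hpq : p < q)
    (hq : q ≤ n) (h : adjustedColumn a q < adjustedColumn a p) :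
    ∃ u, 1 ≤ u ∧ u < q ∧ a q ≤ a u := by
  by_contra! hmax
  have hcard := hA.card_weakDescents_le_sub_of_prefix_lt hp hq hmax
  have hsub := adjustedColumn_sub (a := a) hp hpq.le
  have hpq' := hmax p hp hpq
  omega

lemma exists_le_after_of_adjustedColumn_lt (hA : NDelta a n) (hq : 1 ≤ q) {r : ℕ} (hqr : q < r)
    (hr : r ≤ n) (h : adjustedColumn a r < adjustedColumn a q) :
    ∃ k, q < k ∧ k ≤ r ∧ a k ≤ a q := by
  by_contra! hgt
  have hcard := hA.card_weakDescents_le_sub_of_lt_bottoms hq hr (L := a q) fun j hj => by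
    simp only [weakDescents, mem_filter, mem_Ioc] at hj
    exact hgt j hj.1.1 hj.1.2
  have hsub := adjustedColumn_sub (a := a) hq hqr.le
  have hqr' := hgt r hqr le_rfl
  omega

end NDelta

namespace RecRule

variable {a : ℕ → ℕ} {n : ℕ} {x : ℕ → ℤ}

theorem eq_adjustedColumn (hA : NDelta a n) (hx : RecRule a n x) {t : ℕ} (ht : 1 ≤ t)
    (htn : t ≤ n) :
    x (t + 1) = adjustedColumn a t ∧ (ascZ x (t + 1) : ℤ) = t - #(weakDescents a 1 t) := by
  induction t, ht using Nat.le_induction with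
  | base =>
    have ha1 : a 1 = 1 := le_antisymm (hA.1 1 le_rfl htn).2 (hA.1 1 le_rfl htn).1
    have hasc : ascZ x 2 = 1 := by
      rw [ascZ_succ x le_rfl, if_pos (by rw [hx.1, hx.2.1]; norm_num)]
      simp [ascZ]
    simp [adjustedColumn, weakDescents, hx.2.1, ha1, hasc]
  | succ t ht ih =>
    obtain ⟨hxt, hasc⟩ := ih (by omega)
    have hrec := hx.2.2 (t + 1) (by omega) htn
    rw [Nat.add_sub_cancel] at hrec
    have hcard := card_weakDescents_succ (a := a) ht
    unfold adjustedColumn at *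
    rw [ascZ_succ x (by omega)]
    by_cases hat : a t < a (t + 1)
    · rw [if_pos hat] at hrec
      rw [if_neg (by omega)] at hcard
      have hxlt : x (t + 1) < x (t + 1 + 1) := by omega
      rw [if_pos hxlt]
      push_cast
      omega
    · rw [if_neg hat] at hrec
      rw [if_pos (by omega)] at hcard
      have hxge : ¬ x (t + 1) < x (t + 1 + 1) := by omega
      rw [if_neg hxge]
      push_cast
      omega

theorem nonneg (hA : NDelta a n) (hx : RecRule a n x) {t : ℕ} (ht : 1 ≤ t) (htn : t ≤ n + 1) :
    0 ≤ x t := by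
  rcases ht.eq_or_lt with rfl | ht
  · exact hx.1.ge
  obtain ⟨t, rfl⟩ : ∃ s, t = s + 1 := ⟨t - 1, by omega⟩
  rw [(hx.eq_adjustedColumn hA (by omega) (by omega)).1]
  exact hA.adjustedColumn_nonneg (by omega)

theorem le_ascZ_add_one (hA : NDelta a n) (hx : RecRule a n x) {i : ℕ} (hi : 1 ≤ i)
    (hin : i ≤ n) : x (i + 1) ≤ ascZ x i + 1 := by
  rcases hi.eq_or_lt with rfl | hi
  · simp [ascZ, hx.2.1]
  obtain ⟨t, rfl⟩ : ∃ t, i = t + 1 := ⟨i - 1, by omega⟩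
  have ht : 1 ≤ t := by omega
  obtain ⟨hxi, -⟩ := hx.eq_adjustedColumn hA (by omega) hin
  obtain ⟨-, hasc⟩ := hx.eq_adjustedColumn hA ht (by omega)
  have hcard := card_weakDescents_succ (a := a) ht
  have hai := (hA.1 (t + 1) (by omega) hin).2
  rw [hxi, hasc, adjustedColumn]
  split_ifs at hcard <;> omega

theorem ne_succ (hA : NDelta a n) (hx : RecRule a n x) {i : ℕ} (hi : 1 ≤ i) (hin : i ≤ n) :
    x i ≠ x (i + 1) := by
  rcases hi.eq_or_lt with rfl | hi
  · simp [hx.1, hx.2.1]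
  obtain ⟨t, rfl⟩ : ∃ t, i = t + 1 := ⟨i - 1, by omega⟩
  have ht : 1 ≤ t := by omega
  rw [(hx.eq_adjustedColumn hA ht (by omega)).1, (hx.eq_adjustedColumn hA (by omega) hin).1,
    adjustedColumn, adjustedColumn, card_weakDescents_succ ht]
  split_ifs <;> omega

theorem not_exists_210 (hA : NDelta a n) (hx : RecRule a n x) :
    ¬ ∃ i j k, 1 ≤ i ∧ i < j ∧ j < k ∧ k ≤ n + 1 ∧ x j < x i ∧ x k < x j := by
  rintro ⟨i, j, k, hi, hij, hjk, hk, hji, hkj⟩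
  have hi1 : i ≠ 1 := by
    rintro rfl
    have := hx.nonneg hA (by omega) hk
    rw [hx.1] at hji
    omega
  obtain ⟨p, rfl⟩ : ∃ p, i = p + 1 := ⟨i - 1, by omega⟩
  obtain ⟨q, rfl⟩ : ∃ q, j = q + 1 := ⟨j - 1, by omega⟩
  obtain ⟨r, rfl⟩ : ∃ r, k = r + 1 := ⟨k - 1, by omega⟩
  rw [(hx.eq_adjustedColumn hA (by omega) (by omega)).1,
    (hx.eq_adjustedColumn hA (by omega) (by omega)).1] at hji hkj
  obtain ⟨u, hu, huq, hqu⟩ :=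
    hA.exists_le_before_of_adjustedColumn_lt (by omega) (by omega) (by omega) hji
  obtain ⟨l, hql, hlr, hlq⟩ :=
    hA.exists_le_after_of_adjustedColumn_lt (by omega) (by omega) (by omega) hkj
  exact hA.2 ⟨u, q, l, hu, huq, hql, by omega, hqu, hlq⟩

end RecRule

theorem stmt4_general (n : ℕ) (a : ℕ → ℕ) (hA : NDelta a n)
    (x : ℕ → ℤ) (hx : RecRule a n x) :
    x 1 = 0 ∧
    (∀ i, 1 ≤ i → i ≤ n → 0 ≤ x (i + 1) ∧ x (i + 1) ≤ (ascZ x i : ℤ) + 1) ∧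
    (∀ i, 1 ≤ i → i ≤ n → x i ≠ x (i + 1)) ∧
    ¬ ∃ i j k, 1 ≤ i ∧ i < j ∧ j < k ∧ k ≤ n + 1 ∧ x j < x i ∧ x k < x j :=
  ⟨hx.1, fun _ hi hin => ⟨hx.nonneg hA (by omega) (by omega), hx.le_ascZ_add_one hA hi hin⟩,
    fun _ hi hin => hx.ne_succ hA hi hin, hx.not_exists_210 hA⟩

/-- Theorem 3.4: for `(a 1, …, a n) ∈ N(Δ_n)`, the sequence produced by the recursive rule
is a 210-avoiding primitive ascent sequence of length `n+1`: `x 1 = 0`,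
`0 ≤ x (i+1) ≤ asc(x 1 … x i) + 1`, `x i ≠ x (i+1)`, and no `i < j < k` with
`x i > x j > x k`. -/
theorem stmt4 (n : ℕ) (hn : 1 ≤ n) (a : ℕ → ℕ) (hA : NDelta a n)
    (x : ℕ → ℤ) (hx : RecRule a n x) :
    x 1 = 0 ∧
    (∀ i, 1 ≤ i → i ≤ n → 0 ≤ x (i + 1) ∧ x (i + 1) ≤ (ascZ x i : ℤ) + 1) ∧
    (∀ i, 1 ≤ i → i ≤ n → x i ≠ x (i + 1)) ∧
    ¬ ∃ i j k, 1 ≤ i ∧ i < j ∧ j < k ∧ k ≤ n + 1 ∧ x j < x i ∧ x k < x j :=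
  stmt4_general n a hA x hx
end

section
/- For every n ≥ 1, the number of 210-avoiding primitive ascent sequences of length n+1 equals the number of sequences (a_1, …, a_n) of positive integers with 1 ≤ a_i ≤ i for all i and with no indices i < j < k such that a_i ≥ a_j ≥ a_k. -/
/-- `asc x m` is the number of ascents in the sequence `x 1, x 2, …, x m`. -/
def asc (x : ℕ → ℕ) (m : ℕ) : ℕ :=
  ((Finset.Ico 1 m).filter (fun i => x i < x (i + 1))).card

/-- `x 1, …, x m` is an ascent sequence. -/
def AscentSeq (x : ℕ → ℕ) (m : ℕ) : Prop :=
  x 1 = 0 ∧ ∀ i, 2 ≤ i → i ≤ m → x i ≤ asc x (i - 1) + 1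

/-- `x 1, …, x m` avoids the pattern 210. -/
def Avoids210 (x : ℕ → ℕ) (m : ℕ) : Prop :=
  ¬ ∃ i j k, 1 ≤ i ∧ i < j ∧ j < k ∧ k ≤ m ∧ x j < x i ∧ x k < x j

/-- `x 1, …, x m` is primitive: no two consecutive equal entries. -/
def Primitive (x : ℕ → ℕ) (m : ℕ) : Prop :=
  ∀ i, 1 ≤ i → i < m → x i ≠ x (i + 1)

/-!
The bijection sends `x` to `a` with `a i = x (i + 1) + des (x 1, …, x (i + 1))`; its inverse
subtracts the number of weak descents of `a 1, …, a i`. In a primitive sequence every step is an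
ascent or a descent, so `asc + des = i`, and `x (i + 1) ≤ asc` gives `a i ≤ i`. Primitivity also
makes `a i < a j` whenever `i < j` and `x (i + 1) ≤ x (j + 1)`, so a weak 210 in `a` comes from a
210 in `x`. Conversely, take a 210 `p < q < r` in `x` with `r` least, then `q` greatest, then `p`
greatest: at most one step descends between `p` and `q`, and at most one between `q` and `r`, so
adding the descent counts turns the strict drops `x p > x q > x r` into weak ones.
-/

open Finset

def desc (x : ℕ → ℕ) (m : ℕ) : ℕ :=
  ((Ico 1 m).filter (fun t => x (t + 1) < x t)).card

def weakDesc (a : ℕ → ℕ) (m : ℕ) : ℕ :=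
  ((Ico 1 m).filter (fun t => a (t + 1) ≤ a t)).card

section Counting
variable (p : ℕ → Prop) [DecidablePred p]

lemma card_filter_Ico_succ {a b : ℕ} (hab : a ≤ b) :
    ((Ico a (b + 1)).filter p).card = ((Ico a b).filter p).card + if p b then 1 else 0 := by
  simp only [card_filter, sum_Ico_succ_top hab]

lemma card_filter_Ico_consecutive {a b c : ℕ} (hab : a ≤ b) (hbc : b ≤ c) :
    ((Ico a c).filter p).card = ((Ico a b).filter p).card + ((Ico b c).filter p).card := by
  simp only [card_filter, sum_Ico_consecutive _ hab hbc]

end Counting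

lemma asc_succ (x : ℕ → ℕ) {m : ℕ} (hm : 1 ≤ m) :
    asc x (m + 1) = asc x m + if x m < x (m + 1) then 1 else 0 :=
  card_filter_Ico_succ _ hm

lemma desc_succ (x : ℕ → ℕ) {m : ℕ} (hm : 1 ≤ m) :
    desc x (m + 1) = desc x m + if x (m + 1) < x m then 1 else 0 :=
  card_filter_Ico_succ _ hm

lemma weakDesc_succ (a : ℕ → ℕ) {m : ℕ} (hm : 1 ≤ m) :
    weakDesc a (m + 1) = weakDesc a m + if a (m + 1) ≤ a m then 1 else 0 :=
  card_filter_Ico_succ _ hm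

section Descents
variable {x : ℕ → ℕ} {N : ℕ}

lemma AscentSeq.le_asc (hx : AscentSeq x N) : ∀ m, 1 ≤ m → m ≤ N → x m ≤ asc x m
  | 0, h, _ => absurd h (by omega)
  | 1, _, _ => by simp [hx.1]
  | m + 2, _, hm => by
    show x (m + 1 + 1) ≤ asc x (m + 1 + 1)
    have ih := hx.le_asc (m + 1) (by omega) (by omega)
    have hbound : x (m + 1 + 1) ≤ asc x (m + 1) + 1 := hx.2 (m + 2) (by omega) hm
    rw [asc_succ x (by omega : 1 ≤ m + 1)]
    split_ifs <;> omega

lemma Primitive.asc_add_desc (hx : Primitive x N) {m : ℕ} (hm : m ≤ N) :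
    asc x m + desc x m = m - 1 := by
  have h := card_filter_add_card_filter_not (s := Ico 1 m) (fun t => x t < x (t + 1))
  rw [Nat.card_Ico] at h
  rw [asc, desc, ← h]
  congr 2
  refine filter_congr fun t ht => ?_
  have := hx t (mem_Ico.1 ht).1 (by grind)
  omega

lemma Primitive.one_le_add_desc (hx : Primitive x N) {i : ℕ} (h1 : 1 ≤ i) (h2 : i < N) :
    1 ≤ x (i + 1) + desc x (i + 1) := by
  have := hx i h1 h2
  rw [desc_succ x h1]
  split_ifs <;> omega

lemma Primitive.lt_of_forall_not_desc (hx : Primitive x N) {p q : ℕ} (hp : 1 ≤ p) (hpq : p < q)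
    (hq : q ≤ N) (hnd : ∀ t, p ≤ t → t < q → ¬ x (t + 1) < x t) : x p < x q := by
  induction q, hpq using Nat.le_induction with
  | base =>
    show x p < x (p + 1)
    have hne := hx p hp hq
    have hnot := hnd p le_rfl (by omega)
    omega
  | succ q hpq ih =>
    have hne := hx q (by omega) (by omega)
    have hnot := hnd q (by omega) (by omega)
    have hlt := ih (by omega) fun t h1 h2 => hnd t h1 (by omega)
    omega

lemma Primitive.add_desc_lt_add_desc (hx : Primitive x N) {p q : ℕ} (hp : 1 ≤ p) (hpq : p < q)
    (hq : q ≤ N) (hle : x p ≤ x q) : x p + desc x p < x q + desc x q := by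
  have hsplit : desc x q = desc x p + ((Ico p q).filter fun t => x (t + 1) < x t).card :=
    card_filter_Ico_consecutive _ hp hpq.le
  rcases Nat.eq_zero_or_pos ((Ico p q).filter fun t => x (t + 1) < x t).card with h0 | hpos
  · have := hx.lt_of_forall_not_desc hp hpq hq fun t h1 h2 =>
      filter_eq_empty_iff.1 (card_eq_zero.1 h0) (mem_Ico.2 ⟨h1, h2⟩)
    omega
  · omega

end Descents

section Pattern210
variable {x : ℕ → ℕ} {N : ℕ}

lemma Avoids210.mono {m k : ℕ} (h : Avoids210 x m) (hkm : k ≤ m) : Avoids210 x k :=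
  fun ⟨i, j, l, h1, h2, h3, h4, h5, h6⟩ => h ⟨i, j, l, h1, h2, h3, h4.trans hkm, h5, h6⟩

lemma desc_le_desc_add_one_of_top {p q : ℕ} (hp : 1 ≤ p) (hpq : p < q) (hqp : x q < x p)
    (havoid : Avoids210 x q) (hmid : ∀ s, p < s → s < q → x s ≤ x q) :
    desc x q ≤ desc x p + 1 := by
  have hsub : ((Ico p q).filter fun t => x (t + 1) < x t) ⊆ {p} := by
    intro t ht
    rw [mem_filter, mem_Ico] at ht
    rw [mem_singleton]
    by_contra hne
    have hxt := hmid t (by omega) (by omega)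
    exact havoid ⟨p, t, t + 1, hp, by omega, by omega, by omega, by omega, by omega⟩
  have hcard := card_le_card hsub
  rw [card_singleton] at hcard
  unfold desc
  rw [card_filter_Ico_consecutive _ hp hpq.le]
  omega

lemma desc_le_desc_add_one_of_bottom {p q r : ℕ} (hp : 1 ≤ p) (hpq : p < q) (hqr : q < r)
    (hqp : x q < x p) (hrq : x r < x q) (havoid : Avoids210 x (r - 1))
    (hlast : ∀ i s, 1 ≤ i → i < s → q < s → s < r → x r < x s → x i ≤ x s) :
    desc x r ≤ desc x q + 1 := by
  have hbetween : ∀ s, q < s → s < r → x q < x s := by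
    intro s hqs hsr
    rcases lt_trichotomy (x s) (x q) with hlt | heq | hgt
    · exact absurd ⟨p, q, s, hp, hpq, hqs, by omega, hqp, hlt⟩ havoid
    · have := hlast p s hp (by omega) hqs hsr (by omega)
      omega
    · exact hgt
  have hsub : ((Ico q r).filter fun t => x (t + 1) < x t) ⊆ {r - 1} := by
    intro t ht
    rw [mem_filter, mem_Ico] at ht
    rw [mem_singleton]
    by_contra hne
    have hxt := hbetween (t + 1) (by omega) (by omega)
    rcases Nat.eq_or_lt_of_le ht.1.1 with rfl | hqt
    · omega
    · have := hlast t (t + 1) (by omega) (by omega) (by omega) (by omega) (by omega)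
      omega
  have hcard := card_le_card hsub
  rw [card_singleton] at hcard
  unfold desc
  rw [card_filter_Ico_consecutive _ (by omega : 1 ≤ q) hqr.le]
  omega

/-- `r` is the least position where a 210 can end, `q` the last middle position of a 210 ending
at `r`, and `p` the last position before `q` with `x q < x p`. -/
lemma exists_extremal_210 (h : ¬ Avoids210 x N) :
    ∃ p q r, 1 ≤ p ∧ p < q ∧ q < r ∧ r ≤ N ∧ x q < x p ∧ x r < x q ∧ Avoids210 x (r - 1) ∧
      (∀ i s, 1 ≤ i → i < s → q < s → s < r → x r < x s → x i ≤ x s) ∧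
      (∀ s, p < s → s < q → x s ≤ x q) := by
  classical
  have hr : ∃ r, ∃ p q, 1 ≤ p ∧ p < q ∧ q < r ∧ r ≤ N ∧ x q < x p ∧ x r < x q := by
    obtain ⟨p, q, r, hpqr⟩ := not_not.1 h
    exact ⟨r, p, q, hpqr⟩
  obtain ⟨p₁, q₁, hp₁, hpq₁, hqr₁, hrN, hqp₁, hrq₁⟩ := Nat.find_spec hr
  have havoid : Avoids210 x (Nat.find hr - 1) := fun ⟨i, j, k, hi, hij, hjk, hk, hji, hkj⟩ =>
    Nat.find_min hr (m := k) (by omega) ⟨i, j, hi, hij, hjk, by omega, hji, hkj⟩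
  set r := Nat.find hr
  let Q s := x r < x s ∧ ∃ i, 1 ≤ i ∧ i < s ∧ x s < x i
  obtain ⟨hrq, p₂, hp₂, hpq₂, hqp₂⟩ : Q (Nat.findGreatest Q (r - 1)) :=
    Nat.findGreatest_spec (m := q₁) (by omega) ⟨hrq₁, p₁, hp₁, hpq₁, hqp₁⟩
  set q := Nat.findGreatest Q (r - 1)
  have hqr : q < r := (Nat.findGreatest_le _).trans_lt (by omega)
  let P i := 1 ≤ i ∧ x q < x i
  obtain ⟨hp, hqp⟩ : P (Nat.findGreatest P (q - 1)) :=
    Nat.findGreatest_spec (m := p₂) (by omega) ⟨hp₂, hqp₂⟩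
  set p := Nat.findGreatest P (q - 1)
  have hpq : p < q := (Nat.findGreatest_le _).trans_lt (by omega)
  refine ⟨p, q, r, hp, hpq, hqr, hrN, hqp, hrq, havoid, ?_, ?_⟩
  · intro i s hi his hqs hsr hrs
    by_contra hsi
    exact Nat.findGreatest_is_greatest hqs (by omega) ⟨hrs, i, hi, his, by omega⟩
  · intro s hps hsq
    by_contra hsq'
    exact Nat.findGreatest_is_greatest hps (by omega) ⟨by omega, by omega⟩

theorem exists_210_weak_210_add_desc (h : ¬ Avoids210 x N) :
    ∃ p q r, 1 ≤ p ∧ p < q ∧ q < r ∧ r ≤ N ∧ x q < x p ∧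
      x q + desc x q ≤ x p + desc x p ∧ x r + desc x r ≤ x q + desc x q := by
  obtain ⟨p, q, r, hp, hpq, hqr, hrN, hqp, hrq, havoid, hlast, hmid⟩ := exists_extremal_210 h
  have htop := desc_le_desc_add_one_of_top hp hpq hqp (havoid.mono (by omega)) hmid
  have hbot := desc_le_desc_add_one_of_bottom hp hpq hqr hqp hrq havoid hlast
  exact ⟨p, q, r, hp, hpq, hqr, hrN, hqp, by omega, by omega⟩

end Pattern210

def BoundedSeq (a : ℕ → ℕ) (m : ℕ) : Prop :=
  ∀ i, 1 ≤ i → i ≤ m → 1 ≤ a i ∧ a i ≤ i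

def AvoidsWeak210 (a : ℕ → ℕ) (m : ℕ) : Prop :=
  ¬ ∃ i j k, 1 ≤ i ∧ i < j ∧ j < k ∧ k ≤ m ∧ a j ≤ a i ∧ a k ≤ a j

def primitiveAscent210Free (n : ℕ) : Set (ℕ → ℕ) :=
  {x | (∀ i, i = 0 ∨ n + 1 < i → x i = 0) ∧
    AscentSeq x (n + 1) ∧ Avoids210 x (n + 1) ∧ Primitive x (n + 1)}

def boundedWeak210Free (n : ℕ) : Set (ℕ → ℕ) :=
  {a | (∀ i, i = 0 ∨ n < i → a i = 0) ∧ BoundedSeq a n ∧ AvoidsWeak210 a n}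

def toBoundedSeq (n : ℕ) (x : ℕ → ℕ) (i : ℕ) : ℕ :=
  if 1 ≤ i ∧ i ≤ n then x (i + 1) + desc x (i + 1) else 0

/-- On `boundedWeak210Free n` the subtraction does not truncate, by `BoundedSeq.weakDesc_le`. -/
def toAscentSeq (n : ℕ) (a : ℕ → ℕ) (j : ℕ) : ℕ :=
  if 2 ≤ j ∧ j ≤ n + 1 then a (j - 1) - weakDesc a (j - 1) else 0

section ToBoundedSeq
variable {n : ℕ} {x : ℕ → ℕ}

lemma toBoundedSeq_of_mem {i : ℕ} (h1 : 1 ≤ i) (h2 : i ≤ n) :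
    toBoundedSeq n x i = x (i + 1) + desc x (i + 1) :=
  if_pos ⟨h1, h2⟩

lemma boundedSeq_toBoundedSeq (hx : AscentSeq x (n + 1)) (hprim : Primitive x (n + 1)) :
    BoundedSeq (toBoundedSeq n x) n := by
  intro i h1 h2
  rw [toBoundedSeq_of_mem h1 h2]
  have hle := hx.le_asc (i + 1) (by omega) (by omega)
  have hsum := hprim.asc_add_desc (m := i + 1) (by omega)
  have hpos := hprim.one_le_add_desc h1 (by omega)
  omega

lemma avoidsWeak210_toBoundedSeq (hprim : Primitive x (n + 1)) (havoid : Avoids210 x (n + 1)) :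
    AvoidsWeak210 (toBoundedSeq n x) n := by
  rintro ⟨i, j, k, hi, hij, hjk, hkn, hji, hkj⟩
  have ei := toBoundedSeq_of_mem (x := x) hi (by omega : i ≤ n)
  have ej := toBoundedSeq_of_mem (x := x) (by omega : 1 ≤ j) (by omega : j ≤ n)
  have ek := toBoundedSeq_of_mem (x := x) (by omega : 1 ≤ k) hkn
  refine havoid ⟨i + 1, j + 1, k + 1, by omega, by omega, by omega, by omega, ?_, ?_⟩
  · by_contra hle
    have := hprim.add_desc_lt_add_desc (by omega) (by omega : i + 1 < j + 1) (by omega)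
      (not_lt.1 hle)
    omega
  · by_contra hle
    have := hprim.add_desc_lt_add_desc (by omega) (by omega : j + 1 < k + 1) (by omega)
      (not_lt.1 hle)
    omega

lemma mapsTo_toBoundedSeq :
    Set.MapsTo (toBoundedSeq n) (primitiveAscent210Free n) (boundedWeak210Free n) :=
  fun _ ⟨_, hx, havoid, hprim⟩ =>
    ⟨fun _ hi => if_neg (by omega), boundedSeq_toBoundedSeq hx hprim,
      avoidsWeak210_toBoundedSeq hprim havoid⟩

lemma toBoundedSeq_succ_le_iff (hprim : Primitive x (n + 1)) {t : ℕ} (h1 : 1 ≤ t)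
    (h2 : t + 1 ≤ n) :
    toBoundedSeq n x (t + 1) ≤ toBoundedSeq n x t ↔ x (t + 1 + 1) < x (t + 1) := by
  have hdesc := desc_succ x (m := t + 1) (by omega)
  rw [toBoundedSeq_of_mem h1 (by omega), toBoundedSeq_of_mem (by omega) h2]
  constructor
  · intro hle
    by_contra hlt
    have := hprim.add_desc_lt_add_desc (by omega) (by omega : t + 1 < t + 1 + 1) (by omega)
      (not_lt.1 hlt)
    omega
  · intro hlt
    rw [if_pos hlt] at hdesc
    omega

lemma weakDesc_toBoundedSeq (hx : AscentSeq x (n + 1)) (hprim : Primitive x (n + 1)) :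
    ∀ i ≤ n, weakDesc (toBoundedSeq n x) i = desc x (i + 1)
  | 0, _ => by simp [weakDesc, desc]
  | 1, _ => by simp [weakDesc, desc, filter_singleton, hx.1]
  | i + 1 + 1, hi => by
    rw [weakDesc_succ _ (by omega), desc_succ x (by omega),
      weakDesc_toBoundedSeq hx hprim (i + 1) (by omega)]
    simp only [toBoundedSeq_succ_le_iff hprim (by omega : 1 ≤ i + 1) hi]

lemma toAscentSeq_toBoundedSeq (hsupp : ∀ i, i = 0 ∨ n + 1 < i → x i = 0)
    (hx : AscentSeq x (n + 1)) (hprim : Primitive x (n + 1)) :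
    toAscentSeq n (toBoundedSeq n x) = x := by
  funext j
  unfold toAscentSeq
  split_ifs with hj
  · obtain ⟨i, rfl⟩ : ∃ i, j = i + 1 := ⟨j - 1, by omega⟩
    rw [Nat.add_sub_cancel, toBoundedSeq_of_mem (by omega) (by omega),
      weakDesc_toBoundedSeq hx hprim i (by omega), Nat.add_sub_cancel]
  · rcases (by omega : j = 0 ∨ j = 1 ∨ n + 1 < j) with rfl | rfl | hj
    · exact (hsupp 0 (Or.inl rfl)).symm
    · exact hx.1.symm
    · exact (hsupp j (Or.inr hj)).symm

end ToBoundedSeq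

section ToAscentSeq
variable {n : ℕ} {a : ℕ → ℕ}

/-- The weak descents of `a` up to `i` have distinct bottoms in `[1, a i]`. -/
lemma BoundedSeq.weakDesc_le (hb : BoundedSeq a n) (hav : AvoidsWeak210 a n) {i : ℕ}
    (hi : i ≤ n) : weakDesc a i ≤ a i := by
  have key := card_le_card_of_injOn (s := (Ico 1 i).filter fun t => a (t + 1) ≤ a t)
    (t := Icc 1 (a i)) (fun t => a (t + 1)) ?_ ?_
  · simpa [weakDesc] using key
  · intro t ht
    simp only [coe_filter, mem_Ico, Set.mem_ofPred_eq] at ht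
    simp only [coe_Icc, Set.mem_Icc]
    refine ⟨(hb (t + 1) (by omega) (by omega)).1, ?_⟩
    rcases Nat.eq_or_lt_of_le (by omega : t + 1 ≤ i) with h | h
    · rw [h]
    · by_contra hgt
      exact hav ⟨t, t + 1, i, ht.1.1, by omega, h, hi, ht.2, by omega⟩
  · intro t₁ ht₁ t₂ ht₂ heq
    simp only [coe_filter, mem_Ico, Set.mem_ofPred_eq] at ht₁ ht₂ heq
    by_contra hne
    rcases Nat.lt_or_gt_of_ne hne with hlt | hlt
    · exact hav ⟨t₁, t₁ + 1, t₂ + 1, ht₁.1.1, by omega, by omega, by omega, ht₁.2, heq.ge⟩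
    · exact hav ⟨t₂, t₂ + 1, t₁ + 1, ht₂.1.1, by omega, by omega, by omega, ht₂.2, heq.le⟩

lemma toAscentSeq_one : toAscentSeq n a 1 = 0 :=
  if_neg (by omega)

lemma toAscentSeq_succ_add_weakDesc (hb : BoundedSeq a n) (hav : AvoidsWeak210 a n) {i : ℕ}
    (h1 : 1 ≤ i) (h2 : i ≤ n) : toAscentSeq n a (i + 1) + weakDesc a i = a i := by
  have := hb.weakDesc_le hav h2
  rw [toAscentSeq, if_pos ⟨by omega, by omega⟩, Nat.add_sub_cancel]
  omega

lemma toAscentSeq_succ_lt_iff (hb : BoundedSeq a n) (hav : AvoidsWeak210 a n) {t : ℕ}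
    (h1 : 1 ≤ t) (h2 : t + 1 ≤ n) :
    toAscentSeq n a (t + 1 + 1) < toAscentSeq n a (t + 1) ↔ a (t + 1) ≤ a t := by
  have hcur := toAscentSeq_succ_add_weakDesc hb hav h1 (by omega)
  have hnext := toAscentSeq_succ_add_weakDesc hb hav (by omega : 1 ≤ t + 1) h2
  have hstep := weakDesc_succ a h1
  split_ifs at hstep <;> omega

lemma toAscentSeq_succ_ne (hb : BoundedSeq a n) (hav : AvoidsWeak210 a n) {t : ℕ}
    (h1 : 1 ≤ t) (h2 : t + 1 ≤ n) : toAscentSeq n a (t + 1 + 1) ≠ toAscentSeq n a (t + 1) := by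
  have hcur := toAscentSeq_succ_add_weakDesc hb hav h1 (by omega)
  have hnext := toAscentSeq_succ_add_weakDesc hb hav (by omega : 1 ≤ t + 1) h2
  have hstep := weakDesc_succ a h1
  split_ifs at hstep <;> omega

lemma primitive_toAscentSeq (hb : BoundedSeq a n) (hav : AvoidsWeak210 a n) :
    Primitive (toAscentSeq n a) (n + 1) := by
  intro i h1 h2
  obtain ⟨t, rfl⟩ : ∃ t, i = t + 1 := ⟨i - 1, by omega⟩
  rcases Nat.eq_zero_or_pos t with rfl | ht
  · have hval := toAscentSeq_succ_add_weakDesc hb hav le_rfl (by omega : 1 ≤ n)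
    have ha1 := (hb 1 le_rfl (by omega)).1
    simp only [weakDesc, Ico_self, filter_empty, card_empty] at hval
    rw [zero_add, toAscentSeq_one]
    omega
  · exact (toAscentSeq_succ_ne hb hav ht (by omega)).symm

lemma desc_toAscentSeq (hb : BoundedSeq a n) (hav : AvoidsWeak210 a n) :
    ∀ i ≤ n, desc (toAscentSeq n a) (i + 1) = weakDesc a i
  | 0, _ => by simp [desc, weakDesc]
  | 1, _ => by simp [desc, weakDesc, filter_singleton, toAscentSeq_one]
  | i + 1 + 1, hi => by
    rw [desc_succ _ (by omega), weakDesc_succ _ (by omega),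
      desc_toAscentSeq hb hav (i + 1) (by omega)]
    simp only [toAscentSeq_succ_lt_iff hb hav (by omega : 1 ≤ i + 1) hi]

lemma toAscentSeq_succ_add_desc (hb : BoundedSeq a n) (hav : AvoidsWeak210 a n) {i : ℕ}
    (h1 : 1 ≤ i) (h2 : i ≤ n) :
    toAscentSeq n a (i + 1) + desc (toAscentSeq n a) (i + 1) = a i := by
  rw [desc_toAscentSeq hb hav i h2, toAscentSeq_succ_add_weakDesc hb hav h1 h2]

lemma ascentSeq_toAscentSeq (hb : BoundedSeq a n) (hav : AvoidsWeak210 a n) :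
    AscentSeq (toAscentSeq n a) (n + 1) := by
  refine ⟨toAscentSeq_one, fun j hj1 hj2 => ?_⟩
  obtain ⟨i, rfl⟩ : ∃ i, j = i + 1 := ⟨j - 1, by omega⟩
  have hsum := (primitive_toAscentSeq hb hav).asc_add_desc (m := i + 1) hj2
  have hval := toAscentSeq_succ_add_desc hb hav (i := i) (by omega) (by omega)
  have hai := (hb i (by omega) (by omega)).2
  have hasc := asc_succ (toAscentSeq n a) (by omega : 1 ≤ i)
  rw [Nat.add_sub_cancel]
  split_ifs at hasc <;> omega

lemma avoids210_toAscentSeq (hb : BoundedSeq a n) (hav : AvoidsWeak210 a n) :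
    Avoids210 (toAscentSeq n a) (n + 1) := by
  by_contra h
  obtain ⟨p, q, r, hp, hpq, hqr, hr, hqp, hfqp, hfrq⟩ := exists_210_weak_210_add_desc h
  have hp2 : 2 ≤ p := by
    by_contra hp1
    rw [show p = 1 by omega, toAscentSeq_one] at hqp
    omega
  obtain ⟨i, rfl⟩ : ∃ i, p = i + 1 := ⟨p - 1, by omega⟩
  obtain ⟨j, rfl⟩ : ∃ j, q = j + 1 := ⟨q - 1, by omega⟩
  obtain ⟨k, rfl⟩ : ∃ k, r = k + 1 := ⟨r - 1, by omega⟩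
  rw [toAscentSeq_succ_add_desc hb hav (by omega) (by omega),
    toAscentSeq_succ_add_desc hb hav (by omega) (by omega)] at hfqp hfrq
  exact hav ⟨i, j, k, by omega, by omega, by omega, by omega, hfqp, hfrq⟩

lemma mapsTo_toAscentSeq :
    Set.MapsTo (toAscentSeq n) (boundedWeak210Free n) (primitiveAscent210Free n) :=
  fun _ ⟨_, hb, hav⟩ =>
    ⟨fun _ hi => if_neg (by omega), ascentSeq_toAscentSeq hb hav, avoids210_toAscentSeq hb hav,
      primitive_toAscentSeq hb hav⟩

lemma toBoundedSeq_toAscentSeq (hsupp : ∀ i, i = 0 ∨ n < i → a i = 0) (hb : BoundedSeq a n)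
    (hav : AvoidsWeak210 a n) : toBoundedSeq n (toAscentSeq n a) = a := by
  funext i
  unfold toBoundedSeq
  split_ifs with hi
  · exact toAscentSeq_succ_add_desc hb hav hi.1 hi.2
  · exact (hsupp i (by omega)).symm

end ToAscentSeq

theorem stmt8_general (n : ℕ) :
    {x : ℕ → ℕ | (∀ i, i = 0 ∨ n + 1 < i → x i = 0) ∧
      AscentSeq x (n + 1) ∧ Avoids210 x (n + 1) ∧ Primitive x (n + 1)}.ncard =
    {a : ℕ → ℕ | (∀ i, i = 0 ∨ n < i → a i = 0) ∧
      (∀ i, 1 ≤ i → i ≤ n → 1 ≤ a i ∧ a i ≤ i) ∧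
      ¬ ∃ i j k, 1 ≤ i ∧ i < j ∧ j < k ∧ k ≤ n ∧ a j ≤ a i ∧ a k ≤ a j}.ncard := by
  have hinv : Set.InvOn (toAscentSeq n) (toBoundedSeq n)
      (primitiveAscent210Free n) (boundedWeak210Free n) :=
    ⟨fun _ ⟨hsupp, hx, _, hprim⟩ => toAscentSeq_toBoundedSeq hsupp hx hprim,
      fun _ ⟨hsupp, hb, hav⟩ => toBoundedSeq_toAscentSeq hsupp hb hav⟩
  exact (hinv.bijOn mapsTo_toBoundedSeq mapsTo_toAscentSeq).ncard_eq

/-- The bijection `φ` of Theorems 3.2/3.4/3.5: for `n ≥ 1`, 210-avoiding primitive ascent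
sequences of length `n+1` are equinumerous with sequences `(a 1, …, a n)` with `1 ≤ a i ≤ i`
and no indices `i < j < k` with `a i ≥ a j ≥ a k`.  A sequence of length `m` is encoded as a
function `ℕ → ℕ` supported on positions `1, …, m`. -/
theorem stmt8 (n : ℕ) (hn : 1 ≤ n) :
    {x : ℕ → ℕ | (∀ i, i = 0 ∨ n + 1 < i → x i = 0) ∧
      AscentSeq x (n + 1) ∧ Avoids210 x (n + 1) ∧ Primitive x (n + 1)}.ncard =
    {a : ℕ → ℕ | (∀ i, i = 0 ∨ n < i → a i = 0) ∧
      (∀ i, 1 ≤ i → i ≤ n → 1 ≤ a i ∧ a i ≤ i) ∧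
      ¬ ∃ i j k, 1 ≤ i ∧ i < j ∧ j < k ∧ k ≤ n ∧ a j ≤ a i ∧ a k ≤ a j}.ncard :=
  stmt8_general n
end
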